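/- Let φ_Δ be a nowhere-vanishing differentiable characteristic function with φ_Δ(0) = 1, and let ψ be a differentiable function on [−m, m] with ψ(0) = 1. Suppose that for all |u| ≤ m, |ψ(u) − φ_Δ(u)| ≤ (ζ/γ)·|φ_Δ(u)| with 0 < ζ < γ. Then for all |u| ≤ m, |∫₀^u (ψ'(v)/ψ(v) − φ_Δ'(v)/φ_Δ(v)) dv| ≤ (γ/ζ)·log(γ/(γ−ζ))·|ψ(u) − φ_Δ(u)|/|φ_Δ(u)|. -/

import Mathlib

/-!
Write `ψ / φΔ = 1 + h` with `h = (ψ - φΔ) / φΔ`, so that `‖h‖ ≤ r := ζ / γ < 1`. Then `ψ / φΔ`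
stays in the slit plane, `log (ψ / φΔ)` is a primitive of `ψ' / ψ - φΔ' / φΔ`, and the integral
equals `log (1 + h(u))` because `ψ(0) = φΔ(0) = 1`. Expanding
`log (1 + h) = ∑ (-1)ⁿ hⁿ⁺¹ / (n + 1)` and bounding `‖h‖ⁿ⁺¹ ≤ ‖h‖ rⁿ` gives
`‖log (1 + h)‖ ≤ ‖h‖ ∑ rⁿ / (n + 1) = ‖h‖ · (-log (1 - r) / r) = ‖h‖ · (γ / ζ) log (γ / (γ - ζ))`.
-/

open MeasureTheory intervalIntegral

theorem Real.hasSum_pow_div_succ {r : ℝ} (hr : |r| < 1) (hr0 : r ≠ 0) :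
    HasSum (fun n : ℕ => r ^ n / (n + 1)) (-Real.log (1 - r) / r) := by
  have hterm : (fun n : ℕ => r ^ n / (n + 1)) = fun n : ℕ => r ^ (n + 1) / (n + 1) / r := by
    funext n
    rw [pow_succ]
    field_simp
  rw [hterm]
  exact (Real.hasSum_pow_div_log_of_abs_lt_one hr).div_const r

namespace Complex

theorem norm_log_one_add_le_of_norm_le {z : ℂ} {r : ℝ} (hz : ‖z‖ ≤ r) (hr0 : 0 < r)
    (hr1 : r < 1) : ‖log (1 + z)‖ ≤ -Real.log (1 - r) / r * ‖z‖ := by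
  have hlog : HasSum (fun n : ℕ => -((-z) ^ (n + 1) / (n + 1))) (log (1 + z)) := by
    simpa using (hasSum_taylorSeries_neg_log' (z := -z) (by simpa using hz.trans_lt hr1)).neg
  have hmajorant : HasSum (fun n : ℕ => ‖z‖ * (r ^ n / (n + 1))) (‖z‖ * (-Real.log (1 - r) / r)) :=
    (Real.hasSum_pow_div_succ (by rwa [abs_of_pos hr0]) hr0.ne').mul_left _
  refine (hlog.norm_le_of_bounded hmajorant fun n => ?_).trans_eq (mul_comm _ _)
  have hpow : ‖z‖ ^ (n + 1) ≤ ‖z‖ * r ^ n := by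
    rw [pow_succ']
    gcongr
  rw [norm_neg, norm_div, norm_pow, norm_neg, mul_div_assoc']
  norm_cast
  gcongr

theorem div_mem_slitPlane_of_norm_sub_lt {a b : ℂ} (h : ‖a - b‖ < ‖b‖) : a / b ∈ slitPlane := by
  have hb : b ≠ 0 := norm_pos_iff.mp ((norm_nonneg _).trans_lt h)
  have hab : a / b = 1 + (a - b) / b := by field_simp; ring
  rw [hab]
  exact mem_slitPlane_of_norm_lt_one (by rwa [norm_div, div_lt_one (norm_pos_iff.mpr hb)])

theorem hasDerivAt_log_div {f g : ℝ → ℂ} {f' g' : ℂ} {x : ℝ} (hf : HasDerivAt f f' x)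
    (hg : HasDerivAt g g' x) (hgx : g x ≠ 0) (hslit : f x / g x ∈ slitPlane) :
    HasDerivAt (fun t => log (f t / g t)) (f' / f x - g' / g x) x := by
  have hfx : f x ≠ 0 := (div_ne_zero_iff.mp (slitPlane_ne_zero hslit)).1
  refine ((hasDerivAt_log hslit).comp x (hf.div hg hgx)).congr_deriv ?_
  field_simp

end Complex

theorem intervalIntegral.norm_integral_le_of_hasDerivAt {E : Type*} [NormedAddCommGroup E]
    [NormedSpace ℝ E] [CompleteSpace E] {f F : ℝ → E} {a b C : ℝ}
    (hF : ∀ x ∈ Set.uIcc a b, HasDerivAt F (f x) x) (hFC : ‖F b - F a‖ ≤ C) :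
    ‖∫ x in a..b, f x‖ ≤ C := by
  by_cases hf : IntervalIntegrable f volume a b
  · rwa [integral_eq_sub_of_hasDerivAt hF hf]
  · rw [integral_undef hf, norm_zero]
    exact (norm_nonneg _).trans hFC

theorem stmt_9_general (ν : Measure ℝ) [IsProbabilityMeasure ν]
    (φΔ ψ : ℝ → ℂ)
    (hchar : ∀ u, φΔ u = ∫ x, Complex.exp (u * x * Complex.I) ∂ν)
    (hφdiff : Differentiable ℝ φΔ) (hφne : ∀ u, φΔ u ≠ 0)
    (m : ℝ)
    (hψdiff : ∀ u ∈ Set.Icc (-m) m, DifferentiableAt ℝ ψ u)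
    (hψ0 : ψ 0 = 1)
    (ζ γ : ℝ) (hζ : 0 < ζ) (hζγ : ζ < γ)
    (hclose : ∀ u, |u| ≤ m → ‖ψ u - φΔ u‖ ≤ (ζ / γ) * ‖φΔ u‖) :
    ∀ u, |u| ≤ m →
      ‖∫ v in (0 : ℝ)..u, (deriv ψ v / ψ v - deriv φΔ v / φΔ v)‖
        ≤ (γ / ζ) * Real.log (γ / (γ - ζ)) * (‖ψ u - φΔ u‖ / ‖φΔ u‖) := by
  intro u hu
  have hγ : 0 < γ := hζ.trans hζγ
  have hr0 : 0 < ζ / γ := div_pos hζ hγ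
  have hr1 : ζ / γ < 1 := (div_lt_one hγ).mpr hζγ
  have hφ0 : φΔ 0 = 1 := by simp [hchar]
  have hnear : ∀ v, |v| ≤ m → ‖ψ v - φΔ v‖ < ‖φΔ v‖ := fun v hv =>
    (hclose v hv).trans_lt (mul_lt_of_lt_one_left (norm_pos_iff.mpr (hφne v)) hr1)
  have hderiv : ∀ v ∈ Set.uIcc 0 u, HasDerivAt (fun t => Complex.log (ψ t / φΔ t))
      (deriv ψ v / ψ v - deriv φΔ v / φΔ v) v := fun v hv => by
    have hvm : |v| ≤ m := (by simpa using Set.abs_sub_left_of_mem_uIcc hv : |v| ≤ |u|).trans hu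
    exact Complex.hasDerivAt_log_div (hψdiff v (abs_le.mp hvm)).hasDerivAt
      (hφdiff v).hasDerivAt (hφne v) (Complex.div_mem_slitPlane_of_norm_sub_lt (hnear v hvm))
  refine norm_integral_le_of_hasDerivAt hderiv ?_
  have hh : ‖(ψ u - φΔ u) / φΔ u‖ ≤ ζ / γ := by
    rw [norm_div, div_le_iff₀ (norm_pos_iff.mpr (hφne u))]
    exact hclose u hu
  have hconst : -Real.log (1 - ζ / γ) / (ζ / γ) = γ / ζ * Real.log (γ / (γ - ζ)) := by
    rw [one_sub_div hγ.ne', ← Real.log_inv, inv_div]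
    field_simp
  have hsplit : ψ u / φΔ u = 1 + (ψ u - φΔ u) / φΔ u := by field_simp [hφne u]; ring
  calc ‖Complex.log (ψ u / φΔ u) - Complex.log (ψ 0 / φΔ 0)‖
      = ‖Complex.log (1 + (ψ u - φΔ u) / φΔ u)‖ := by simp [hψ0, hφ0, hsplit]
    _ ≤ γ / ζ * Real.log (γ / (γ - ζ)) * (‖ψ u - φΔ u‖ / ‖φΔ u‖) := by
      rw [← hconst, ← norm_div]
      exact Complex.norm_log_one_add_le_of_norm_le hh hr0 hr1

/-- Control of the distinguished logarithm: if `ψ` is uniformly close to a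
nowhere-vanishing differentiable characteristic function `φΔ` in relative error
`ζ/γ < 1`, then the difference of distinguished logarithms is controlled. -/
theorem stmt_9 (ν : Measure ℝ) [IsProbabilityMeasure ν]
    (φΔ ψ : ℝ → ℂ)
    (hchar : ∀ u, φΔ u = ∫ x, Complex.exp (u * x * Complex.I) ∂ν)
    (hφdiff : Differentiable ℝ φΔ) (hφne : ∀ u, φΔ u ≠ 0)
    (m : ℝ) (hm : 0 < m)
    (hψdiff : ∀ u ∈ Set.Icc (-m) m, DifferentiableAt ℝ ψ u)
    (hψ0 : ψ 0 = 1)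
    (ζ γ : ℝ) (hζ : 0 < ζ) (hζγ : ζ < γ)
    (hclose : ∀ u, |u| ≤ m → ‖ψ u - φΔ u‖ ≤ (ζ / γ) * ‖φΔ u‖) :
    ∀ u, |u| ≤ m →
      ‖∫ v in (0 : ℝ)..u, (deriv ψ v / ψ v - deriv φΔ v / φΔ v)‖
        ≤ (γ / ζ) * Real.log (γ / (γ - ζ)) * (‖ψ u - φΔ u‖ / ‖φΔ u‖) :=
  stmt_9_general ν φΔ ψ hchar hφdiff hφne m hψdiff hψ0 ζ γ hζ hζγ hclose
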